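/- arXiv:2006.10501 — 4 statements merged into one kernel-verified Lean document; each statement's English description precedes it below -/
import Mathlib

section
/- Let R ≅ R₁ × ... × Rₙ be a finite commutative ring with each Rᵢ local with Jacobson radical Jᵢ of nilpotency order nᵢ, and let πₛ denote the projection onto Rₛ. For distinct vertices M, N of AG(R), the distance d(M,N) equals 3 if and only if for every s ∈ {1,...,n} we have Rₛ ∈ {πₛ(M), πₛ(N)}, and there exists k ∈ {1,...,n} with 0 ∉ {π_k(M), π_k(N)}. -/
open Ideal IsLocalRing

/-- A nonzero ideal with nonzero annihilator: a vertex of the annihilating-ideal graph. -/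
def AGIsVertex {R : Type*} [CommRing R] (I : Ideal R) : Prop :=
  I ≠ ⊥ ∧ ∃ K : Ideal R, K ≠ ⊥ ∧ I * K = ⊥

/-- The vertex set of the annihilating-ideal graph. -/
def AGVertex (R : Type*) [CommRing R] : Type _ := {I : Ideal R // AGIsVertex I}

/-- The annihilating-ideal graph of a commutative ring. -/
def AG (R : Type*) [CommRing R] : SimpleGraph (AGVertex R) where
  Adj I J := I ≠ J ∧ I.1 * J.1 = ⊥
  symm := by
    constructor
    rintro a b ⟨h1, h2⟩
    exact ⟨h1.symm, by rwa [mul_comm] at h2⟩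
  loopless := by constructor; rintro a ⟨h, -⟩; exact h rfl

/-- A resolving set for a graph. -/
def IsResolving {V : Type*} (G : SimpleGraph V) (W : Set V) : Prop :=
  ∀ u v : V, (∀ w ∈ W, G.dist u w = G.dist v w) → u = v

/-- The metric dimension of a graph. -/
noncomputable def metricDim {V : Type*} (G : SimpleGraph V) : ℕ :=
  sInf {n | ∃ W : Set V, IsResolving G W ∧ W.Finite ∧ W.ncard = n}

/-- The ideal of a product ring given by a family of ideals of the factors. -/
def piIdeal {ι : Type*} {R : ι → Type*} [∀ i, CommRing (R i)]
    (I : ∀ i, Ideal (R i)) : Ideal (∀ i, R i) where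
  carrier := {x | ∀ i, x i ∈ I i}
  add_mem' h1 h2 i := (I _).add_mem (h1 i) (h2 i)
  zero_mem' i := (I i).zero_mem
  smul_mem' c x hx := by
    intro i
    simpa using (I i).mul_mem_left (c i) (hx i)

/-- The family of ideals with the ideal `I` at index `s` and zero elsewhere. -/
def singleIdeal {ι : Type*} [DecidableEq ι] {R : ι → Type*} [∀ i, CommRing (R i)]
    (s : ι) (I : Ideal (R s)) : ∀ i, Ideal (R i) :=
  fun i => if h : i = s then cast (by rw [h]) I else ⊥

/-- The family of ideals with the ideal `I` at index `s` and everything elsewhere. -/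
def coSingleIdeal {ι : Type*} [DecidableEq ι] {R : ι → Type*} [∀ i, CommRing (R i)]
    (s : ι) (I : Ideal (R s)) : ∀ i, Ideal (R i) :=
  fun i => if h : i = s then cast (by rw [h]) I else ⊤

section helpers

set_option linter.unusedSectionVars false

variable {ι : Type*} [Fintype ι] [DecidableEq ι] {R : ι → Type*} [∀ i, CommRing (R i)]

lemma eval_surjective (s : ι) : Function.Surjective (Pi.evalRingHom R s) :=
  fun a => ⟨Pi.single s a, Pi.single_eq_same s a⟩

lemma mem_map_eval {I : Ideal (∀ i, R i)} {s : ι} {a : R s} :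
    a ∈ I.map (Pi.evalRingHom R s) ↔ ∃ y ∈ I, y s = a := by
  rw [Ideal.mem_map_iff_of_surjective _ (eval_surjective s)]
  rfl

lemma eq_bot_of_maps {I : Ideal (∀ i, R i)} (h : ∀ i, I.map (Pi.evalRingHom R i) = ⊥) :
    I = ⊥ := by
  ext x
  simp only [Ideal.mem_bot]
  constructor
  · intro hx
    funext i
    have := Ideal.mem_map_of_mem (Pi.evalRingHom R i) hx
    rw [h i] at this
    simpa using this
  · rintro rfl; exact zero_mem _

lemma no_common (M N : Ideal (∀ i, R i))
    (hall : ∀ s, M.map (Pi.evalRingHom R s) = ⊤ ∨ N.map (Pi.evalRingHom R s) = ⊤)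
    (P : Ideal (∀ i, R i)) (hP : P ≠ ⊥) (hMP : M * P = ⊥) (hNP : N * P = ⊥) : False := by
  apply hP
  apply eq_bot_of_maps
  intro i
  rcases hall i with h | h
  · have := congrArg (Ideal.map (Pi.evalRingHom R i)) hMP
    rwa [Ideal.map_mul, h, Ideal.map_bot, Ideal.top_mul] at this
  · have := congrArg (Ideal.map (Pi.evalRingHom R i)) hNP
    rwa [Ideal.map_mul, h, Ideal.map_bot, Ideal.top_mul] at this

lemma mem_piIdeal {A : ∀ i, Ideal (R i)} {x : ∀ i, R i} :
    x ∈ piIdeal A ↔ ∀ i, x i ∈ A i := Iff.rfl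

lemma adj_adj_of_walk_length_two {V : Type*} {G : SimpleGraph V} {u v : V}
    (p : G.Walk u v) (hp : p.length = 2) : ∃ w, G.Adj u w ∧ G.Adj w v := by
  cases p with
  | nil => simp at hp
  | cons a q =>
    cases q with
    | nil => simp at hp
    | cons a' q' =>
      simp only [SimpleGraph.Walk.length_cons] at hp
      have hc := SimpleGraph.Walk.eq_of_length_eq_zero
        (show q'.length = 0 by omega)
      subst hc
      exact ⟨_, a, a'⟩

end helpers

theorem stmt3 (ι : Type*) [Fintype ι] [DecidableEq ι] (R : ι → Type*)
    [∀ i, CommRing (R i)] [∀ i, Finite (R i)] [∀ i, IsLocalRing (R i)]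
    (ν : ι → ℕ) (h1 : ∀ i, (maximalIdeal (R i)) ^ (ν i) = ⊥)
    (h2 : ∀ i, (maximalIdeal (R i)) ^ (ν i - 1) ≠ ⊥)
    (M N : AGVertex (∀ i, R i)) (hMN : M ≠ N) :
    (AG (∀ i, R i)).dist M N = 3 ↔
      ((∀ s, Ideal.map (Pi.evalRingHom R s) M.1 = ⊤ ∨ Ideal.map (Pi.evalRingHom R s) N.1 = ⊤) ∧
        ∃ k, Ideal.map (Pi.evalRingHom R k) M.1 ≠ ⊥ ∧ Ideal.map (Pi.evalRingHom R k) N.1 ≠ ⊥) := by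
  have hν : ∀ i, 1 ≤ ν i := by
    intro i
    by_contra h
    have hz : ν i = 0 := by omega
    have e1 := h1 i
    have e2 := h2 i
    rw [hz, pow_zero] at e1
    rw [hz] at e2
    norm_num [pow_zero] at e2
    exact e2 e1
  constructor
  · intro hd
    constructor
    · intro s
      by_contra hcon
      push_neg at hcon
      obtain ⟨hMs, hNs⟩ := hcon
      obtain ⟨w, hw, hw0⟩ := (Submodule.ne_bot_iff _).mp (h2 s)
      set g : ∀ i, R i := Pi.single s w with hg
      set P : Ideal (∀ i, R i) := Ideal.span {g} with hPdef
      have hPbot : P ≠ ⊥ := by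
        rw [Submodule.ne_bot_iff]
        refine ⟨g, Ideal.subset_span rfl, fun h0 => hw0 ?_⟩
        have := congrFun h0 s
        simpa [hg] using this
      have key : ∀ I : AGVertex (∀ i, R i),
          I.1.map (Pi.evalRingHom R s) ≠ ⊤ → P * I.1 = ⊥ := by
        intro I hI
        have hle : I.1.map (Pi.evalRingHom R s) ≤ maximalIdeal (R s) := le_maximalIdeal hI
        rw [eq_bot_iff]
        apply Ideal.mul_le.mpr
        intro x hx y hy
        rw [Ideal.mem_span_singleton] at hx
        obtain ⟨c, rfl⟩ := hx
        rw [Submodule.mem_bot]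
        funext i
        show (g * c * y) i = 0
        by_cases his : i = s
        · subst his
          have hys : y i ∈ maximalIdeal (R i) := hle (Ideal.mem_map_of_mem _ hy)
          have hm : w * (c i * y i) ∈
              maximalIdeal (R i) ^ (ν i - 1) * maximalIdeal (R i) :=
            Ideal.mul_mem_mul hw (Ideal.mul_mem_left _ _ hys)
          rw [← pow_succ] at hm
          have hνi : ν i - 1 + 1 = ν i := by have := hν i; omega
          rw [hνi, h1 i] at hm
          have hz : w * (c i * y i) = 0 := by simpa using hm
          simp only [Pi.mul_apply, hg, Pi.single_eq_same]
          rw [mul_assoc]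
          exact hz
        · simp [hg, Pi.single_eq_of_ne his]
      have hPM : P * M.1 = ⊥ := key M hMs
      have hPN : P * N.1 = ⊥ := key N hNs
      have hPv : AGIsVertex P := ⟨hPbot, M.1, M.2.1, hPM⟩
      by_cases hPM' : P = M.1
      · have hadj : (AG (∀ i, R i)).Adj M N := ⟨hMN, by rw [← hPM']; exact hPN⟩
        have := SimpleGraph.dist_eq_one_iff_adj.mpr hadj
        omega
      by_cases hPN' : P = N.1
      · have hadj : (AG (∀ i, R i)).Adj M N :=
          ⟨hMN, by rw [mul_comm, ← hPN']; exact hPM⟩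
        have := SimpleGraph.dist_eq_one_iff_adj.mpr hadj
        omega
      · set Pv : AGVertex (∀ i, R i) := ⟨P, hPv⟩ with hPv'
        have a1 : (AG (∀ i, R i)).Adj M Pv :=
          ⟨fun h => hPM' (congrArg Subtype.val h).symm, by rw [mul_comm]; exact hPM⟩
        have a2 : (AG (∀ i, R i)).Adj Pv N :=
          ⟨fun h => hPN' (congrArg Subtype.val h), hPN⟩
        have := SimpleGraph.dist_le
          (SimpleGraph.Walk.cons a1 (SimpleGraph.Walk.cons a2 SimpleGraph.Walk.nil))
        simp only [SimpleGraph.Walk.length_cons, SimpleGraph.Walk.length_nil] at this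
        omega
    · have hadj : ¬ (AG (∀ i, R i)).Adj M N := by
        intro h
        have := SimpleGraph.dist_eq_one_iff_adj.mpr h
        omega
      have hMN1 : M.1 * N.1 ≠ ⊥ := fun h => hadj ⟨hMN, h⟩
      by_contra hcon
      push_neg at hcon
      apply hMN1
      apply eq_bot_of_maps
      intro i
      rw [Ideal.map_mul]
      by_cases h : M.1.map (Pi.evalRingHom R i) = ⊥
      · rw [h, bot_mul]
      · rw [hcon i h, mul_bot]
  · rintro ⟨hall, k, hMk, hNk⟩
    obtain ⟨KM, hKM0, hMKM⟩ := M.2.2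
    obtain ⟨KN, hKN0, hNKN⟩ := N.2.2
    set A : ∀ i, Ideal (R i) :=
      fun i => Submodule.annihilator (M.1.map (Pi.evalRingHom R i)) with hA
    set B : ∀ i, Ideal (R i) :=
      fun i => Submodule.annihilator (N.1.map (Pi.evalRingHom R i)) with hB
    set Pd : Ideal (∀ i, R i) := piIdeal A with hPd
    set Qd : Ideal (∀ i, R i) := piIdeal B with hQd
    have hMP : M.1 * Pd = ⊥ := by
      rw [eq_bot_iff]
      apply Ideal.mul_le.mpr
      intro x hx y hy
      rw [Submodule.mem_bot]
      funext i
      show x i * y i = 0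
      have hxi : x i ∈ M.1.map (Pi.evalRingHom R i) := Ideal.mem_map_of_mem _ hx
      have := Submodule.mem_annihilator.mp (hy i) _ hxi
      rwa [smul_eq_mul, mul_comm] at this
    have hNQ : N.1 * Qd = ⊥ := by
      rw [eq_bot_iff]
      apply Ideal.mul_le.mpr
      intro x hx y hy
      rw [Submodule.mem_bot]
      funext i
      show x i * y i = 0
      have hxi : x i ∈ N.1.map (Pi.evalRingHom R i) := Ideal.mem_map_of_mem _ hx
      have := Submodule.mem_annihilator.mp (hy i) _ hxi
      rwa [smul_eq_mul, mul_comm] at this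
    have hKP : KM ≤ Pd := by
      intro x hx
      rw [hPd, mem_piIdeal]
      intro i
      rw [hA]
      rw [Submodule.mem_annihilator]
      intro a ha
      obtain ⟨y, hy, rfl⟩ := mem_map_eval.mp ha
      have hmem : y * x ∈ M.1 * KM := Ideal.mul_mem_mul hy hx
      rw [hMKM, Submodule.mem_bot] at hmem
      have := congrFun hmem i
      simp only [Pi.mul_apply, Pi.zero_apply] at this
      rw [smul_eq_mul, mul_comm]
      exact this
    have hKQ : KN ≤ Qd := by
      intro x hx
      rw [hQd, mem_piIdeal]
      intro i
      rw [hB]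
      rw [Submodule.mem_annihilator]
      intro a ha
      obtain ⟨y, hy, rfl⟩ := mem_map_eval.mp ha
      have hmem : y * x ∈ N.1 * KN := Ideal.mul_mem_mul hy hx
      rw [hNKN, Submodule.mem_bot] at hmem
      have := congrFun hmem i
      simp only [Pi.mul_apply, Pi.zero_apply] at this
      rw [smul_eq_mul, mul_comm]
      exact this
    have hPbot : Pd ≠ ⊥ := by
      obtain ⟨x, hx, hx0⟩ := (Submodule.ne_bot_iff _).mp hKM0
      exact (Submodule.ne_bot_iff _).mpr ⟨x, hKP hx, hx0⟩
    have hQbot : Qd ≠ ⊥ := by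
      obtain ⟨x, hx, hx0⟩ := (Submodule.ne_bot_iff _).mp hKN0
      exact (Submodule.ne_bot_iff _).mpr ⟨x, hKQ hx, hx0⟩
    have hPQ : Pd * Qd = ⊥ := by
      rw [eq_bot_iff]
      apply Ideal.mul_le.mpr
      intro x hx y hy
      rw [Submodule.mem_bot]
      funext i
      show x i * y i = 0
      rcases hall i with h | h
      · have := Submodule.mem_annihilator.mp (hx i) 1 (by rw [h]; trivial)
        rw [smul_eq_mul, mul_one] at this
        rw [this, zero_mul]
      · have := Submodule.mem_annihilator.mp (hy i) 1 (by rw [h]; trivial)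
        rw [smul_eq_mul, mul_one] at this
        rw [this, mul_zero]
    have hMP' : M.1 ≠ Pd := by
      intro h
      exact no_common M.1 N.1 hall Qd hQbot (by rw [h, hPQ]) hNQ
    have hNQ' : N.1 ≠ Qd := by
      intro h
      exact no_common M.1 N.1 hall Pd hPbot hMP
        (by rw [h, mul_comm]; exact hPQ)
    have hPQ' : Pd ≠ Qd := by
      intro h
      exact no_common M.1 N.1 hall Pd hPbot hMP (by rw [h]; exact hNQ)
    have hPvert : AGIsVertex Pd := ⟨hPbot, M.1, M.2.1, by rw [mul_comm]; exact hMP⟩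
    have hQvert : AGIsVertex Qd := ⟨hQbot, N.1, N.2.1, by rw [mul_comm]; exact hNQ⟩
    set PV : AGVertex (∀ i, R i) := ⟨Pd, hPvert⟩ with hPV
    set QV : AGVertex (∀ i, R i) := ⟨Qd, hQvert⟩ with hQV
    have a1 : (AG (∀ i, R i)).Adj M PV := ⟨fun h => hMP' (congrArg Subtype.val h), hMP⟩
    have a2 : (AG (∀ i, R i)).Adj PV QV := ⟨fun h => hPQ' (congrArg Subtype.val h), hPQ⟩
    have a3 : (AG (∀ i, R i)).Adj QV N :=
      ⟨fun h => hNQ' (congrArg Subtype.val h).symm, by rw [mul_comm]; exact hNQ⟩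
    let wlk : (AG (∀ i, R i)).Walk M N := SimpleGraph.Walk.cons a1
      (SimpleGraph.Walk.cons a2 (SimpleGraph.Walk.cons a3 SimpleGraph.Walk.nil))
    have hle : (AG (∀ i, R i)).dist M N ≤ 3 := by
      have := SimpleGraph.dist_le wlk
      simp only [wlk, SimpleGraph.Walk.length_cons, SimpleGraph.Walk.length_nil] at this
      omega
    have hr : (AG (∀ i, R i)).Reachable M N := ⟨wlk⟩
    have h0' : (AG (∀ i, R i)).dist M N ≠ 0 :=
      fun h => hMN (hr.dist_eq_zero_iff.mp h)
    have h1' : (AG (∀ i, R i)).dist M N ≠ 1 := by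
      intro h
      have hadj := SimpleGraph.dist_eq_one_iff_adj.mp h
      have hb := hadj.2
      have := congrArg (Ideal.map (Pi.evalRingHom R k)) hb
      rw [Ideal.map_mul, Ideal.map_bot] at this
      rcases hall k with hh | hh
      · rw [hh, Ideal.top_mul] at this; exact hNk this
      · rw [hh, Ideal.mul_top] at this; exact hMk this
    have h2' : (AG (∀ i, R i)).dist M N ≠ 2 := by
      intro h
      obtain ⟨p, hp⟩ := hr.exists_walk_length_eq_dist
      rw [h] at hp
      obtain ⟨mid, ha, hb⟩ := adj_adj_of_walk_length_two p hp
      exact no_common M.1 N.1 hall mid.1 mid.2.1 ha.2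
        (by rw [mul_comm]; exact hb.2)
    omega
end

section
/- Let R be a finite commutative local chain ring with Jacobson radical J of nilpotency order n₁ ≥ 3. Then the set X = {J, J², ..., J^{⌊(n₁-1)/2⌋}} is a resolving set for AG(R): for any two distinct vertices J^a, J^b outside X, there exists J^k ∈ X with d(J^a, J^k) ≠ d(J^b, J^k). -/
open Ideal IsLocalRing

section Aux

variable {R : Type*} [CommRing R] [IsLocalRing R] {n₁ : ℕ}

lemma aux_pow_ne_bot (h2 : (maximalIdeal R) ^ (n₁ - 1) ≠ ⊥) {k : ℕ} (hk : k ≤ n₁ - 1) :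
    (maximalIdeal R) ^ k ≠ ⊥ := fun h =>
  h2 (le_bot_iff.mp (h ▸ Ideal.pow_le_pow_right hk))

lemma aux_pow_eq_bot (h1 : (maximalIdeal R) ^ n₁ = ⊥) {k : ℕ} (hk : n₁ ≤ k) :
    (maximalIdeal R) ^ k = ⊥ :=
  le_bot_iff.mp (h1 ▸ Ideal.pow_le_pow_right hk)

lemma aux_pow_stab {a : ℕ}
    (h : (maximalIdeal R) ^ a = (maximalIdeal R) ^ (a + 1)) :
    ∀ j, (maximalIdeal R) ^ a = (maximalIdeal R) ^ (a + j)
  | 0 => rfl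
  | j + 1 => by
    rw [← add_assoc, pow_succ, ← aux_pow_stab h j, ← pow_succ, ← h]

lemma aux_pow_inj (h1 : (maximalIdeal R) ^ n₁ = ⊥) (h2 : (maximalIdeal R) ^ (n₁ - 1) ≠ ⊥)
    {a b : ℕ} (ha : a ≤ n₁ - 1) (hb : b ≤ n₁ - 1)
    (hab : (maximalIdeal R) ^ a = (maximalIdeal R) ^ b) : a = b := by
  have key : ∀ c d : ℕ, c < d → d ≤ n₁ - 1 →
      (maximalIdeal R) ^ c ≠ (maximalIdeal R) ^ d := by
    intro c d hcd hd h
    have hstep : (maximalIdeal R) ^ c = (maximalIdeal R) ^ (c + 1) :=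
      le_antisymm (h ▸ Ideal.pow_le_pow_right (by omega))
        (Ideal.pow_le_pow_right (by omega))
    have hbot : (maximalIdeal R) ^ c = ⊥ := by
      have := aux_pow_stab hstep (n₁ - c)
      rw [show c + (n₁ - c) = n₁ by omega] at this
      rw [this, h1]
    exact aux_pow_ne_bot h2 (by omega : c ≤ n₁ - 1) hbot
  rcases lt_trichotomy a b with h | h | h
  · exact absurd hab (key a b h hb)
  · exact h
  · exact absurd hab.symm (key b a h ha)

lemma aux_classify [IsPrincipalIdealRing R] (hn : 3 ≤ n₁)
    (h1 : (maximalIdeal R) ^ n₁ = ⊥) {I : Ideal R} (hI : AGIsVertex I) :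
    ∃ k, 1 ≤ k ∧ k ≤ n₁ - 1 ∧ I = (maximalIdeal R) ^ k := by
  classical
  obtain ⟨hIbot, K, hK, hIK⟩ := hI
  have hItop : I ≠ ⊤ := by
    rintro rfl
    rw [Ideal.top_mul] at hIK
    exact hK hIK
  have hIm : I ≤ maximalIdeal R := le_maximalIdeal hItop
  have hP : ∃ j, ¬ I ≤ (maximalIdeal R) ^ j :=
    ⟨n₁, fun h => hIbot (le_bot_iff.mp (h1 ▸ h))⟩
  set j₀ := Nat.find hP with hj₀def
  have hj₀ : ¬ I ≤ (maximalIdeal R) ^ j₀ := Nat.find_spec hP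
  have hj₀2 : 2 ≤ j₀ := by
    rcases Nat.lt_or_ge j₀ 2 with h | h
    · exfalso
      interval_cases j₀
      · exact hj₀ (by simp)
      · exact hj₀ (by simpa using hIm)
    · exact h
  have hj₀n : j₀ ≤ n₁ := Nat.find_le (fun h => hIbot (le_bot_iff.mp (h1 ▸ h)))
  set k := j₀ - 1 with hkdef
  have hle : I ≤ (maximalIdeal R) ^ k := by
    by_contra h
    exact absurd (Nat.find_min hP (show k < j₀ by omega)) (not_not.mpr h)
  have hnle : ¬ I ≤ (maximalIdeal R) ^ (k + 1) := by
    rw [show k + 1 = j₀ by omega]; exact hj₀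
  obtain ⟨π, hπ⟩ := (IsPrincipalIdealRing.principal (maximalIdeal R)).principal
  have hpow : ∀ j : ℕ, (maximalIdeal R) ^ j = Ideal.span {π ^ j} := by
    intro j
    rw [show maximalIdeal R = Ideal.span {π} from hπ, Ideal.span_singleton_pow]
  obtain ⟨x, hxI, hxn⟩ := SetLike.not_le_iff_exists.mp hnle
  have hxk : x ∈ Ideal.span {π ^ k} := by rw [← hpow]; exact hle hxI
  obtain ⟨c, hc⟩ := Ideal.mem_span_singleton'.mp hxk
  have hcm : c ∉ maximalIdeal R := by
    intro hcmem
    apply hxn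
    rw [hpow]
    have : c ∈ Ideal.span {π} := by rw [← show maximalIdeal R = Ideal.span {π} from hπ]; exact hcmem
    obtain ⟨d, hd⟩ := Ideal.mem_span_singleton'.mp this
    exact Ideal.mem_span_singleton'.mpr ⟨d, by rw [← hc, ← hd]; ring⟩
  have hcu : IsUnit c := IsLocalRing.notMem_maximalIdeal.mp hcm
  have hπk : π ^ k ∈ I := by
    obtain ⟨u, hu⟩ := hcu
    have : (↑u⁻¹ : R) * x = π ^ k := by
      rw [← hc, ← hu, ← mul_assoc]
      simp
    rw [← this]
    exact I.mul_mem_left _ hxI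
  have hge : (maximalIdeal R) ^ k ≤ I := by
    rw [hpow]
    exact Ideal.span_le.mpr (Set.singleton_subset_iff.mpr hπk)
  exact ⟨k, by omega, by omega, le_antisymm hle hge⟩

end Aux

section Main

variable {R : Type*} [CommRing R] [IsLocalRing R] {n₁ : ℕ}

lemma aux_isVertex_pow (hn : 3 ≤ n₁) (h1 : (maximalIdeal R) ^ n₁ = ⊥)
    (h2 : (maximalIdeal R) ^ (n₁ - 1) ≠ ⊥) {k : ℕ} (hk1 : 1 ≤ k) (hk2 : k ≤ n₁ - 1) :
    AGIsVertex ((maximalIdeal R) ^ k) :=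
  ⟨aux_pow_ne_bot h2 hk2, (maximalIdeal R) ^ (n₁ - k),
    aux_pow_ne_bot h2 (by omega), by
      rw [← pow_add]; exact aux_pow_eq_bot h1 (by omega)⟩

lemma aux_adj_of (h1 : (maximalIdeal R) ^ n₁ = ⊥) (h2 : (maximalIdeal R) ^ (n₁ - 1) ≠ ⊥)
    {u v : AGVertex R} {a b : ℕ} (hu : u.1 = (maximalIdeal R) ^ a)
    (hv : v.1 = (maximalIdeal R) ^ b) (ha : a ≤ n₁ - 1) (hb : b ≤ n₁ - 1)
    (hne : a ≠ b) (hsum : n₁ ≤ a + b) : (AG R).Adj u v := by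
  refine ⟨fun h => hne ?_, ?_⟩
  · exact aux_pow_inj h1 h2 ha hb (by rw [← hu, ← hv, h])
  · rw [hu, hv, ← pow_add]
    exact aux_pow_eq_bot h1 hsum

lemma aux_not_adj (h2 : (maximalIdeal R) ^ (n₁ - 1) ≠ ⊥)
    {u v : AGVertex R} {a b : ℕ} (hu : u.1 = (maximalIdeal R) ^ a)
    (hv : v.1 = (maximalIdeal R) ^ b) (hsum : a + b < n₁) : ¬ (AG R).Adj u v := by
  rintro ⟨-, hbot⟩
  rw [hu, hv, ← pow_add] at hbot
  exact aux_pow_ne_bot h2 (by omega : a + b ≤ n₁ - 1) hbot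

lemma aux_reachable [IsPrincipalIdealRing R] (hn : 3 ≤ n₁)
    (h1 : (maximalIdeal R) ^ n₁ = ⊥) (h2 : (maximalIdeal R) ^ (n₁ - 1) ≠ ⊥)
    (u v : AGVertex R) : (AG R).Reachable u v := by
  obtain ⟨a, ha1, ha2, hua⟩ := aux_classify hn h1 u.2
  obtain ⟨b, hb1, hb2, hvb⟩ := aux_classify hn h1 v.2
  set x : AGVertex R := ⟨(maximalIdeal R) ^ (n₁ - 1),
    aux_isVertex_pow hn h1 h2 (by omega) le_rfl⟩ with hxdef
  have hx : ∀ (w : AGVertex R) (c : ℕ), 1 ≤ c → c ≤ n₁ - 1 →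
      w.1 = (maximalIdeal R) ^ c → (AG R).Reachable w x := by
    intro w c hc1 hc2 hw
    rcases eq_or_ne c (n₁ - 1) with h | h
    · have : w = x := Subtype.ext (by rw [hw, h])
      rw [this]
    · exact (aux_adj_of h1 h2 hw rfl hc2 le_rfl h (by omega)).reachable
  exact (hx u a ha1 ha2 hua).trans (hx v b hb1 hb2 hvb).symm

lemma aux_key [IsPrincipalIdealRing R] (hn : 3 ≤ n₁)
    (h1 : (maximalIdeal R) ^ n₁ = ⊥) (h2 : (maximalIdeal R) ^ (n₁ - 1) ≠ ⊥)
    {u v : AGVertex R} {a b : ℕ} (hu : u.1 = (maximalIdeal R) ^ a)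
    (hv : v.1 = (maximalIdeal R) ^ b) (ha1 : 1 ≤ a) (hb2 : b ≤ n₁ - 1) (hab : a < b) :
    ∃ w : AGVertex R, (∃ k, 1 ≤ k ∧ k ≤ (n₁ - 1) / 2 ∧ w.1 = (maximalIdeal R) ^ k) ∧
      (AG R).dist u w ≠ (AG R).dist v w := by
  rcases Nat.lt_or_ge (a + b) n₁ with hsum | hsum
  · refine ⟨u, ⟨a, ha1, by omega, hu⟩, ?_⟩
    rw [SimpleGraph.dist_self]
    intro h0
    have hvu : v = u :=
      ((aux_reachable hn h1 h2 v u).dist_eq_zero_iff).mp h0.symm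
    have : b = a := aux_pow_inj h1 h2 hb2 (by omega) (by rw [← hv, ← hu, hvu])
    omega
  · have hk1 : 1 ≤ n₁ - b := by omega
    have hk2' : n₁ - b ≤ n₁ - 1 := by omega
    refine ⟨⟨(maximalIdeal R) ^ (n₁ - b), aux_isVertex_pow hn h1 h2 hk1 hk2'⟩,
      ⟨n₁ - b, hk1, by omega, rfl⟩, ?_⟩
    have hd1 : (AG R).dist v ⟨(maximalIdeal R) ^ (n₁ - b), aux_isVertex_pow hn h1 h2 hk1 hk2'⟩ = 1 :=
      SimpleGraph.dist_eq_one_iff_adj.mpr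
        (aux_adj_of h1 h2 hv rfl hb2 hk2' (by omega) (by omega))
    rw [hd1]
    rcases eq_or_ne a (n₁ - b) with he | he
    · have : u = ⟨(maximalIdeal R) ^ (n₁ - b), aux_isVertex_pow hn h1 h2 hk1 hk2'⟩ :=
        Subtype.ext (by rw [hu, he])
      rw [← this, SimpleGraph.dist_self]
      omega
    · intro h
      exact aux_not_adj h2 hu rfl (by omega : a + (n₁ - b) < n₁)
        (SimpleGraph.dist_eq_one_iff_adj.mp h)

end Main

theorem stmt6 (R : Type*) [CommRing R] [Finite R] [IsLocalRing R] [IsPrincipalIdealRing R] (n₁ : ℕ) (hn : 3 ≤ n₁) (h1 : (maximalIdeal R) ^ n₁ = ⊥) (h2 : (maximalIdeal R) ^ (n₁ - 1) ≠ ⊥) :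
    IsResolving (AG R)
      {v : AGVertex R | ∃ k, 1 ≤ k ∧ k ≤ (n₁ - 1) / 2 ∧ v.1 = (maximalIdeal R) ^ k} := by
  intro u v huv
  obtain ⟨a, ha1, ha2, hua⟩ := aux_classify hn h1 u.2
  obtain ⟨b, hb1, hb2, hvb⟩ := aux_classify hn h1 v.2
  rcases lt_trichotomy a b with h | h | h
  · obtain ⟨w, hw, hd⟩ := aux_key hn h1 h2 hua hvb ha1 hb2 h
    exact absurd (huv w hw) hd
  · exact Subtype.ext (by rw [hua, hvb, h])
  · obtain ⟨w, hw, hd⟩ := aux_key hn h1 h2 hvb hua hb1 ha2 h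
    exact absurd (huv w hw).symm hd
end

section
/- Let R be a finite commutative local chain ring with Jacobson radical J of nilpotency order n₁. Then the metric dimension of AG(R) equals ⌊(n₁-1)/2⌋. -/
open Ideal IsLocalRing

/-! ### Graph isomorphism invariance of the metric dimension -/

lemma iso_dist_le {V V' : Type*} {G : SimpleGraph V} {G' : SimpleGraph V'} (e : G ≃g G')
    (u v : V) : G'.dist (e u) (e v) ≤ G.dist u v := by
  by_cases h : G.Reachable u v
  · obtain ⟨p, hp⟩ := h.exists_walk_length_eq_dist
    calc G'.dist (e u) (e v) ≤ (p.map e.toHom).length := SimpleGraph.dist_le _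
      _ = G.dist u v := by rw [SimpleGraph.Walk.length_map, hp]
  · have h' : ¬ G'.Reachable (e u) (e v) := fun hr => h (SimpleGraph.Iso.reachable_iff.mp hr)
    rw [SimpleGraph.dist_eq_zero_iff_eq_or_not_reachable.mpr (Or.inr h')]
    exact Nat.zero_le _

lemma iso_dist {V V' : Type*} {G : SimpleGraph V} {G' : SimpleGraph V'} (e : G ≃g G')
    (u v : V) : G'.dist (e u) (e v) = G.dist u v := by
  refine le_antisymm (iso_dist_le e u v) ?_
  have := iso_dist_le e.symm (e u) (e v)
  simpa using this

lemma resolving_image {V V' : Type*} {G : SimpleGraph V} {G' : SimpleGraph V'} (e : G ≃g G')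
    {W : Set V} (hW : IsResolving G W) : IsResolving G' (⇑e '' W) := by
  intro u v h
  have key : ∀ w ∈ W, G.dist (e.symm u) w = G.dist (e.symm v) w := by
    intro w hw
    have h1 := h (e w) ⟨w, hw, rfl⟩
    have e1 : G'.dist (e (e.symm u)) (e w) = G.dist (e.symm u) w := iso_dist e _ _
    have e2 : G'.dist (e (e.symm v)) (e w) = G.dist (e.symm v) w := iso_dist e _ _
    simp only [RelIso.apply_symm_apply] at e1 e2
    rw [← e1, ← e2, h1]
  have := hW _ _ key
  have := congrArg e this
  simpa using this

lemma metricDim_set_subset {V V' : Type*} {G : SimpleGraph V} {G' : SimpleGraph V'}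
    (e : G ≃g G') :
    {n | ∃ W : Set V, IsResolving G W ∧ W.Finite ∧ W.ncard = n} ⊆
      {n | ∃ W : Set V', IsResolving G' W ∧ W.Finite ∧ W.ncard = n} := by
  rintro n ⟨W, hres, hfin, hcard⟩
  exact ⟨⇑e '' W, resolving_image e hres, hfin.image _,
    by rw [Set.ncard_image_of_injective W e.injective, hcard]⟩

lemma metricDim_iso {V V' : Type*} {G : SimpleGraph V} {G' : SimpleGraph V'} (e : G ≃g G') :
    metricDim G = metricDim G' := by
  unfold metricDim
  congr 1
  exact le_antisymm (metricDim_set_subset e) (metricDim_set_subset e.symm)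

/-! ### The comparison graph on `Fin m` -/

def CG (m : ℕ) : SimpleGraph (Fin m) where
  Adj i j := i ≠ j ∧ m ≤ i.1 + j.1 + 1
  symm := by constructor; rintro i j ⟨hij, hm⟩; exact ⟨hij.symm, by omega⟩
  loopless := by constructor; rintro i ⟨h, -⟩; exact h rfl

lemma CG_dist {m : ℕ} (i j : Fin m) :
    (CG m).dist i j = if i = j then 0 else if m ≤ i.1 + j.1 + 1 then 1 else 2 := by
  split_ifs with h h'
  · subst h; exact SimpleGraph.dist_self
  · exact SimpleGraph.dist_eq_one_iff_adj.mpr ⟨h, h'⟩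
  · have hm : 0 < m := i.pos
    have hi : i.1 ≠ m - 1 := by
      intro he; exact h' (by omega)
    have hj : j.1 ≠ m - 1 := by
      intro he; exact h' (by omega)
    have hit : (CG m).Adj i ⟨m - 1, by omega⟩ :=
      ⟨Fin.ne_of_val_ne hi, by simp; omega⟩
    have htj : (CG m).Adj ⟨m - 1, by omega⟩ j :=
      ⟨Fin.ne_of_val_ne (by simpa using fun he => hj he.symm), by simp; omega⟩
    let p : (CG m).Walk i j := .cons hit (.cons htj .nil)
    have hle : (CG m).dist i j ≤ 2 := by
      have := SimpleGraph.dist_le p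
      simpa [p] using this
    have h0 : (CG m).dist i j ≠ 0 := by
      rw [Ne, SimpleGraph.dist_eq_zero_iff_eq_or_not_reachable]
      push_neg
      exact ⟨h, ⟨p⟩⟩
    have h1 : (CG m).dist i j ≠ 1 := fun hd => h' (SimpleGraph.dist_eq_one_iff_adj.mp hd).2
    omega

lemma card_odds_range (M : ℕ) :
    ((Finset.range M).filter (fun w => w % 2 = 1)).card = M / 2 := by
  induction M with
  | zero => simp
  | succ k ih =>
    rw [Finset.range_add_one, Finset.filter_insert]
    split_ifs with h
    · rw [Finset.card_insert_of_notMem (by simp), ih]; omega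
    · rw [ih]; omega

lemma card_odds (m : ℕ) : ({w : Fin m | w.1 % 2 = 1}).ncard = m / 2 := by
  classical
  rw [Set.ncard_eq_toFinset_card']
  have step1 : (Set.toFinset {w : Fin m | w.1 % 2 = 1}).card
      = ((Finset.range m).filter (fun w => w % 2 = 1)).card := by
    apply Finset.card_bij (fun w _ => w.1)
    · intro a ha
      simp only [Set.mem_toFinset, Set.mem_setOf_eq] at ha
      simp only [Finset.mem_filter, Finset.mem_range]
      exact ⟨a.isLt, ha⟩
    · intro a _ b _ hab; exact Fin.ext hab
    · intro b hb
      simp only [Finset.mem_filter, Finset.mem_range] at hb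
      exact ⟨⟨b, hb.1⟩, by simp [hb.2], rfl⟩
  rw [step1, card_odds_range]

lemma CG_resolving (m : ℕ) : IsResolving (CG m) {w : Fin m | w.1 % 2 = 1} := by
  have key : ∀ u v : Fin m, u.1 < v.1 →
      (∀ w ∈ {w : Fin m | w.1 % 2 = 1}, (CG m).dist u w = (CG m).dist v w) → False := by
    intro u v huv h
    have hvne : v ≠ u := Fin.ne_of_val_ne (by omega)
    have hune : u ≠ v := Fin.ne_of_val_ne (by omega)
    by_cases hu : u.1 % 2 = 1
    · have hd := h u hu
      rw [CG_dist, CG_dist, if_pos rfl, if_neg hvne] at hd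
      split_ifs at hd <;> omega
    · by_cases hv : v.1 % 2 = 1
      · have hd := h v hv
        rw [CG_dist, CG_dist, if_pos rfl, if_neg hune] at hd
        split_ifs at hd <;> omega
      · have hvm : v.1 < m := v.isLt
        obtain ⟨w0, hodd, hlt, hd1, hd2⟩ :
            ∃ w0, w0 % 2 = 1 ∧ w0 < m ∧ ¬ (m ≤ u.1 + w0 + 1) ∧ m ≤ v.1 + w0 + 1 := by
          refine ⟨if (m - 2 - u.1) % 2 = 1 then m - 2 - u.1 else m - 3 - u.1, ?_, ?_, ?_, ?_⟩ <;>
            split_ifs <;> omega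
        have hd := h ⟨w0, hlt⟩ hodd
        have hne1 : u ≠ (⟨w0, hlt⟩ : Fin m) := by
          intro he
          rw [he] at hu
          exact hu hodd
        have hne2 : v ≠ (⟨w0, hlt⟩ : Fin m) := by
          intro he
          rw [he] at hv
          exact hv hodd
        rw [CG_dist, CG_dist, if_neg hne1, if_neg hne2, if_neg hd1, if_pos hd2] at hd
        exact absurd hd (by omega)
  intro u v h
  by_contra hne
  rcases Nat.lt_or_ge u.1 v.1 with hlt | hge
  · exact key u v hlt h
  · have hlt : v.1 < u.1 := lt_of_le_of_ne hge (fun he => hne (Fin.ext he.symm))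
    exact key v u hlt (fun w hw => (h w hw).symm)

lemma CG_lower {m k : ℕ} {W : Set (Fin m)} (hres : IsResolving (CG m) W)
    (hcard : W.ncard = k) : m / 2 ≤ k := by
  classical
  have hWfin : W.Finite := Set.toFinite W
  set A : Fin m → Set (Fin m) := fun i => {w : Fin m | w ∈ W ∧ m ≤ i.1 + w.1 + 1} with hA
  set c : Fin m → ℕ := fun i => (A i).ncard with hc
  have hmono : ∀ i j : Fin m, i.1 ≤ j.1 → A i ⊆ A j := by
    intro i j hij w hw
    exact ⟨hw.1, by have := hw.2; omega⟩
  have hinj : Set.InjOn c Wᶜ := by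
    intro i hi j hj hcij
    by_contra hne
    have hAeq : A i = A j := by
      rcases le_total i.1 j.1 with hle | hle
      · exact Set.eq_of_subset_of_ncard_le (hmono i j hle) (le_of_eq hcij.symm) (Set.toFinite _)
      · exact (Set.eq_of_subset_of_ncard_le (hmono j i hle) (le_of_eq hcij) (Set.toFinite _)).symm
    apply hne
    apply hres i j
    intro w hw
    have hne1 : i ≠ w := fun he => hi (he ▸ hw)
    have hne2 : j ≠ w := fun he => hj (he ▸ hw)
    rw [CG_dist, CG_dist, if_neg hne1, if_neg hne2]
    by_cases hiw : m ≤ i.1 + w.1 + 1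
    · have hmem : w ∈ A i := ⟨hw, hiw⟩
      rw [hAeq] at hmem
      rw [if_pos hiw, if_pos hmem.2]
    · have hmem : w ∉ A j := fun hmem => hiw (hAeq ▸ hmem : w ∈ A i).2
      rw [if_neg hiw, if_neg (fun hj' => hmem ⟨hw, hj'⟩)]
  have hle : ∀ i, c i ≤ k := by
    intro i
    calc c i ≤ W.ncard := Set.ncard_le_ncard (fun w hw => hw.1) hWfin
      _ = k := hcard
  have himage : ∀ i ∈ Wᶜ, c i ∈ (↑(Finset.range (k + 1)) : Set ℕ) := by
    intro i _
    have := hle i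
    exact Finset.mem_coe.mpr (Finset.mem_range.mpr (by omega))
  have hcount := Set.ncard_le_ncard_of_injOn (t := (↑(Finset.range (k + 1)) : Set ℕ))
    c himage hinj (Finset.range (k + 1)).finite_toSet
  rw [Set.ncard_coe_finset, Finset.card_range] at hcount
  have hcompl : W.ncard + (Wᶜ).ncard = m := by
    rw [Set.ncard_add_ncard_compl]
    simp [Nat.card_eq_fintype_card]
  omega

lemma CG_metricDim (m : ℕ) : metricDim (CG m) = m / 2 := by
  have hmem : m / 2 ∈ {n | ∃ W : Set (Fin m), IsResolving (CG m) W ∧ W.Finite ∧ W.ncard = n} :=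
    ⟨{w : Fin m | w.1 % 2 = 1}, CG_resolving m, Set.toFinite _, card_odds m⟩
  refine le_antisymm (Nat.sInf_le hmem) (le_csInf ⟨_, hmem⟩ ?_)
  rintro n ⟨W, hres, -, hcard⟩
  exact CG_lower hres hcard

/-! ### Ring lemmas -/

section RingLemmas

variable {R : Type*} [CommRing R] [IsLocalRing R] [IsPrincipalIdealRing R]

lemma ideal_eq_pow {n : ℕ} (h1 : (maximalIdeal R) ^ n = ⊥) (I : Ideal R) (hI : I ≠ ⊥) :
    ∃ a, I = (maximalIdeal R) ^ a := by
  classical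
  obtain ⟨π, hπ0⟩ := Submodule.IsPrincipal.principal (maximalIdeal R)
  have hπ : maximalIdeal R = Ideal.span {π} := hπ0
  have hex : ∃ j, ¬ I ≤ (maximalIdeal R) ^ j := ⟨n, by rw [h1, le_bot_iff]; exact hI⟩
  set k := Nat.find hex with hk
  have hspec : ¬ I ≤ (maximalIdeal R) ^ k := Nat.find_spec hex
  have hk1 : 1 ≤ k := by
    by_contra hk0
    have : k = 0 := by omega
    rw [this, pow_zero, Ideal.one_eq_top] at hspec
    exact hspec le_top
  have hIa : I ≤ (maximalIdeal R) ^ (k - 1) := by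
    have := Nat.find_min hex (show k - 1 < k by omega)
    exact not_not.mp this
  obtain ⟨x, hxI, hxn⟩ := SetLike.not_le_iff_exists.mp hspec
  refine ⟨k - 1, le_antisymm hIa ?_⟩
  have hxmem : x ∈ (maximalIdeal R) ^ (k - 1) := hIa hxI
  rw [hπ, Ideal.span_singleton_pow] at hxmem
  obtain ⟨cc, hcc⟩ := Ideal.mem_span_singleton'.mp hxmem
  have hcu : IsUnit cc := by
    by_contra hcu
    apply hxn
    have hcJ : cc ∈ maximalIdeal R := (mem_maximalIdeal cc).mpr hcu
    have hx2 : x ∈ (maximalIdeal R) * (maximalIdeal R) ^ (k - 1) := by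
      rw [← hcc]
      refine Ideal.mul_mem_mul hcJ ?_
      rw [hπ, Ideal.span_singleton_pow]
      exact Ideal.subset_span rfl
    have hmul : (maximalIdeal R) * (maximalIdeal R) ^ (k - 1) = (maximalIdeal R) ^ k := by
      rw [mul_comm, ← pow_succ, Nat.sub_add_cancel hk1]
    rwa [hmul] at hx2
  calc (maximalIdeal R) ^ (k - 1) = Ideal.span {π ^ (k - 1)} := by
        rw [hπ, Ideal.span_singleton_pow]
    _ ≤ I := by
        rw [Ideal.span_le, Set.singleton_subset_iff]
        obtain ⟨u, hu⟩ := hcu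
        have hπx : π ^ (k - 1) = ↑u⁻¹ * x := by
          rw [← hcc, ← hu, Units.inv_mul_cancel_left]
        rw [hπx]
        exact I.mul_mem_left _ hxI

lemma pow_strict {n : ℕ} (h1 : (maximalIdeal R) ^ n = ⊥) {a : ℕ}
    (h : (maximalIdeal R) ^ (a + 1) = (maximalIdeal R) ^ a) : (maximalIdeal R) ^ a = ⊥ := by
  have key : ∀ t, (maximalIdeal R) ^ (a + t) = (maximalIdeal R) ^ a := by
    intro t
    induction t with
    | zero => rfl
    | succ s ih =>
      calc (maximalIdeal R) ^ (a + (s + 1))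
          = (maximalIdeal R) ^ (a + s) * maximalIdeal R := by
            rw [show a + (s + 1) = (a + s) + 1 from rfl, pow_succ]
        _ = (maximalIdeal R) ^ a * maximalIdeal R := by rw [ih]
        _ = (maximalIdeal R) ^ a := by rw [← pow_succ, h]
  calc (maximalIdeal R) ^ a = (maximalIdeal R) ^ (a + n) := (key n).symm
    _ = (maximalIdeal R) ^ a * (maximalIdeal R) ^ n := pow_add _ _ _
    _ = ⊥ := by rw [h1, Ideal.mul_bot]

end RingLemmas

theorem stmt7 (R : Type*) [CommRing R] [Finite R] [IsLocalRing R] [IsPrincipalIdealRing R] (n₁ : ℕ) (h1 : (maximalIdeal R) ^ n₁ = ⊥) (h2 : (maximalIdeal R) ^ (n₁ - 1) ≠ ⊥) :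
    metricDim (AG R) = (n₁ - 1) / 2 := by
  have hn : 1 ≤ n₁ := by
    by_contra hc
    have : n₁ = 0 := by omega
    subst this
    exact h2 h1
  set m := n₁ - 1 with hm
  have hnonbot : ∀ a, a ≤ m → (maximalIdeal R) ^ a ≠ ⊥ := by
    intro a ha hbot
    exact h2 (le_bot_iff.mp (hbot ▸ Ideal.pow_le_pow_right ha))
  have hbot' : ∀ a, (maximalIdeal R) ^ a = ⊥ ↔ n₁ ≤ a := by
    intro a
    constructor
    · intro h
      by_contra hlt
      exact hnonbot a (by omega) h
    · intro h
      exact le_bot_iff.mp (h1 ▸ Ideal.pow_le_pow_right h)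
  have hinj : ∀ a b : ℕ, a < b → a ≤ m → (maximalIdeal R) ^ a ≠ (maximalIdeal R) ^ b := by
    intro a b hab ham he
    have h11 : (maximalIdeal R) ^ (a + 1) = (maximalIdeal R) ^ a := by
      refine le_antisymm (Ideal.pow_le_pow_right (by omega)) ?_
      calc (maximalIdeal R) ^ a = (maximalIdeal R) ^ b := he
        _ ≤ (maximalIdeal R) ^ (a + 1) := Ideal.pow_le_pow_right (by omega)
    exact hnonbot a ham (pow_strict h1 h11)
  have hvert : ∀ a, 1 ≤ a → a ≤ m → AGIsVertex ((maximalIdeal R) ^ a) := by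
    intro a h1a h2a
    refine ⟨hnonbot a h2a, (maximalIdeal R) ^ (n₁ - a), hnonbot _ (by omega), ?_⟩
    rw [← pow_add]
    exact (hbot' _).mpr (by omega)
  have hvert' : ∀ I : Ideal R, AGIsVertex I → ∃ a, 1 ≤ a ∧ a ≤ m ∧ I = (maximalIdeal R) ^ a := by
    rintro I ⟨hI0, K, hK0, hIK⟩
    obtain ⟨a, ha⟩ := ideal_eq_pow h1 I hI0
    refine ⟨a, ?_, ?_, ha⟩
    · by_contra h0
      have ha0 : a = 0 := by omega
      rw [ha0, pow_zero, Ideal.one_eq_top] at ha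
      rw [ha, Ideal.top_mul] at hIK
      exact hK0 hIK
    · by_contra h0
      exact hI0 (ha.trans ((hbot' a).mpr (by omega)))
  let f : Fin m → AGVertex R := fun i =>
    ⟨(maximalIdeal R) ^ (i.1 + 1), hvert _ (by omega) (by have := i.isLt; omega)⟩
  have hbij : Function.Bijective f := by
    constructor
    · intro i j he
      have hval : (maximalIdeal R) ^ (i.1 + 1) = (maximalIdeal R) ^ (j.1 + 1) :=
        congrArg Subtype.val he
      by_contra hne
      rcases Nat.lt_or_ge i.1 j.1 with hlt | hge
      · exact hinj _ _ (by omega) (by have := i.isLt; omega) hval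
      · have : j.1 < i.1 := lt_of_le_of_ne hge (fun hh => hne (Fin.ext hh.symm))
        exact hinj _ _ (by omega) (by have := j.isLt; omega) hval.symm
    · rintro ⟨I, hI⟩
      obtain ⟨a, ha1, ham, hae⟩ := hvert' I hI
      refine ⟨⟨a - 1, by omega⟩, ?_⟩
      apply Subtype.ext
      show (maximalIdeal R) ^ (a - 1 + 1) = I
      rw [Nat.sub_add_cancel ha1, hae]
  let e : Fin m ≃ AGVertex R := Equiv.ofBijective f hbij
  have hadj : ∀ i j : Fin m, (AG R).Adj (f i) (f j) ↔ (CG m).Adj i j := by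
    intro i j
    constructor
    · rintro ⟨hne, hmul⟩
      refine ⟨fun hh => hne (by rw [hh]), ?_⟩
      rw [← pow_add] at hmul
      have := (hbot' _).mp hmul
      omega
    · rintro ⟨hne, hle⟩
      refine ⟨fun hh => hne (hbij.1 hh), ?_⟩
      show (maximalIdeal R) ^ (i.1 + 1) * (maximalIdeal R) ^ (j.1 + 1) = ⊥
      rw [← pow_add]
      exact (hbot' _).mpr (by omega)
  let iso : CG m ≃g AG R :=
    { toEquiv := e
      map_rel_iff' := by
        intro i j
        exact hadj i j }
  rw [metricDim_iso iso.symm, CG_metricDim]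
end

section
/- Let R = R₁ × R₂ where R₁, R₂ are finite commutative local chain rings with Jacobson radicals J₁, J₂ of nilpotency orders n₁, n₂ ≥ 2 (neither a field). Then X = {J₁^k × 0 : 0 ≤ k ≤ n₁-2} ∪ {0 × J₂^k : 0 ≤ k ≤ n₂-2} is a resolving set for AG(R) of cardinality n₁ + n₂ - 2. -/
open Ideal IsLocalRing

section Chain
variable {R : Type*} [CommRing R] [IsLocalRing R]

lemma chain_ideal_eq_pow [IsPrincipalIdealRing R] {n : ℕ}
    (hpow : (maximalIdeal R) ^ n = ⊥) (I : Ideal R) :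
    ∃ a ≤ n, I = (maximalIdeal R) ^ a := by
  classical
  by_cases hI : I = ⊥
  · exact ⟨n, le_rfl, by rw [hI, hpow]⟩
  obtain ⟨π, hπ⟩ := (IsPrincipalIdealRing.principal (maximalIdeal R)).1
  rw [Ideal.submodule_span_eq] at hπ
  set a := Nat.findGreatest (fun a => I ≤ (maximalIdeal R) ^ a) n with ha
  have hIa : I ≤ (maximalIdeal R) ^ a :=
    Nat.findGreatest_spec (P := fun a => I ≤ (maximalIdeal R) ^ a) (Nat.zero_le n) (by simp)
  have han : a ≤ n := Nat.findGreatest_le n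
  have hane : a ≠ n := by
    rintro h
    exact hI (le_antisymm (by rw [← hpow, ← h]; exact hIa) bot_le)
  have hnot : ¬ I ≤ (maximalIdeal R) ^ (a + 1) :=
    Nat.findGreatest_is_greatest (P := fun a => I ≤ (maximalIdeal R) ^ a) (n := n) (by omega) (by omega)
  obtain ⟨x, hxI, hx⟩ := SetLike.not_le_iff_exists.mp hnot
  have hxa : x ∈ (maximalIdeal R) ^ a := hIa hxI
  rw [hπ, Ideal.span_singleton_pow, Ideal.mem_span_singleton] at hxa
  obtain ⟨c, hc⟩ := hxa
  have hcunit : IsUnit c := by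
    by_contra hcu
    apply hx
    have hcmem : c ∈ maximalIdeal R := hcu
    rw [hπ, Ideal.mem_span_singleton] at hcmem
    obtain ⟨d, hd⟩ := hcmem
    rw [hπ, Ideal.span_singleton_pow, Ideal.mem_span_singleton]
    exact ⟨d, by rw [hc, hd, pow_succ]; ring⟩
  refine ⟨a, han, le_antisymm hIa ?_⟩
  rw [hπ, Ideal.span_singleton_pow, Ideal.span_singleton_le_iff_mem]
  have : π ^ a = x * ↑hcunit.unit⁻¹ := by
    rw [hc]
    rw [mul_assoc, hcunit.mul_val_inv, mul_one]
  rw [this]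
  exact I.mul_mem_right _ hxI

lemma chain_pow_eq_bot_iff {n : ℕ} (hpow : (maximalIdeal R) ^ n = ⊥)
    (hpow' : (maximalIdeal R) ^ (n - 1) ≠ ⊥) {a : ℕ} :
    (maximalIdeal R) ^ a = ⊥ ↔ n ≤ a := by
  constructor
  · intro h
    by_contra hlt
    exact hpow' (le_antisymm (le_trans (Ideal.pow_le_pow_right (by omega)) h.le) bot_le)
  · intro h
    exact le_antisymm (le_trans (Ideal.pow_le_pow_right h) hpow.le) bot_le

lemma chain_pow_inj {n : ℕ} (hpow : (maximalIdeal R) ^ n = ⊥)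
    (hpow' : (maximalIdeal R) ^ (n - 1) ≠ ⊥) {a b : ℕ} (ha : a ≤ n) (hb : b ≤ n)
    (h : (maximalIdeal R) ^ a = (maximalIdeal R) ^ b) : a = b := by
  have key : ∀ x y : ℕ, x < y → y ≤ n →
      (maximalIdeal R) ^ x = (maximalIdeal R) ^ y → False := by
    intro x y hxy hyn he
    have hsucc : (maximalIdeal R) ^ x = (maximalIdeal R) ^ (x + 1) := by
      refine le_antisymm ?_ (Ideal.pow_le_pow_right (by omega))
      calc (maximalIdeal R) ^ x = (maximalIdeal R) ^ y := he
        _ ≤ (maximalIdeal R) ^ (x + 1) := Ideal.pow_le_pow_right (by omega)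
    have hall : ∀ k : ℕ, (maximalIdeal R) ^ x = (maximalIdeal R) ^ (x + k) := by
      intro k
      induction k with
      | zero => rfl
      | succ k ih =>
        rw [show x + (k + 1) = (x + k) + 1 from rfl, pow_succ, ← ih, ← pow_succ, ← hsucc]
    have hbot : (maximalIdeal R) ^ x = ⊥ := by
      rw [hall (n - x), show x + (n - x) = n by omega, hpow]
    exact hpow' (le_antisymm
      (le_trans (Ideal.pow_le_pow_right (by omega)) hbot.le) bot_le)
  rcases lt_trichotomy a b with hlt | he | hgt
  · exact absurd (key a b hlt hb h) (by simp)
  · exact he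
  · exact absurd (key b a hgt ha h.symm) (by simp)

lemma chain_pow_mul_eq_bot_iff {n : ℕ} (hpow : (maximalIdeal R) ^ n = ⊥)
    (hpow' : (maximalIdeal R) ^ (n - 1) ≠ ⊥) {a b : ℕ} :
    (maximalIdeal R) ^ a * (maximalIdeal R) ^ b = ⊥ ↔ n ≤ a + b := by
  rw [← pow_add, chain_pow_eq_bot_iff hpow hpow']

end Chain

section ProdLemmas
variable {A B : Type*} [CommRing A] [CommRing B]

lemma bot_prod_bot : (Ideal.prod (⊥ : Ideal A) (⊥ : Ideal B)) = ⊥ := by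
  ext ⟨x, y⟩
  simp [Ideal.mem_prod, Prod.ext_iff]

lemma prod_eq_bot_iff {I : Ideal A} {J : Ideal B} :
    Ideal.prod I J = ⊥ ↔ I = ⊥ ∧ J = ⊥ := by
  rw [← bot_prod_bot, Ideal.prod_inj]

lemma prod_mul_prod_eq_bot_iff {I₁ K₁ : Ideal A} {I₂ K₂ : Ideal B} :
    Ideal.prod I₁ I₂ * Ideal.prod K₁ K₂ = ⊥ ↔ I₁ * K₁ = ⊥ ∧ I₂ * K₂ = ⊥ := by
  constructor
  · intro h
    constructor
    · rw [eq_bot_iff]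
      refine Ideal.mul_le.mpr fun x hx y hy => ?_
      have hm := Ideal.mul_mem_mul (I := Ideal.prod I₁ I₂) (J := Ideal.prod K₁ K₂)
        (show ((x, 0) : A × B) ∈ _ from (Ideal.mem_prod I₁ I₂).2 ⟨hx, zero_mem _⟩)
        (show ((y, 0) : A × B) ∈ _ from (Ideal.mem_prod K₁ K₂).2 ⟨hy, zero_mem _⟩)
      rw [h, Ideal.mem_bot, Prod.mk_mul_mk, Prod.mk_eq_zero] at hm
      exact hm.1
    · rw [eq_bot_iff]
      refine Ideal.mul_le.mpr fun x hx y hy => ?_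
      have hm := Ideal.mul_mem_mul (I := Ideal.prod I₁ I₂) (J := Ideal.prod K₁ K₂)
        (show ((0, x) : A × B) ∈ _ from (Ideal.mem_prod I₁ I₂).2 ⟨zero_mem _, hx⟩)
        (show ((0, y) : A × B) ∈ _ from (Ideal.mem_prod K₁ K₂).2 ⟨zero_mem _, hy⟩)
      rw [h, Ideal.mem_bot, Prod.mk_mul_mk, Prod.mk_eq_zero] at hm
      exact hm.2
  · rintro ⟨h1, h2⟩
    rw [eq_bot_iff]
    refine Ideal.mul_le.mpr ?_
    rintro ⟨x₁, x₂⟩ ⟨hx1, hx2⟩ ⟨y₁, y₂⟩ ⟨hy1, hy2⟩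
    rw [Ideal.mem_bot, Prod.mk_mul_mk, Prod.mk_eq_zero]
    constructor
    · have := Ideal.mul_mem_mul (show x₁ ∈ I₁ from hx1) (show y₁ ∈ K₁ from hy1)
      rwa [h1, Ideal.mem_bot] at this
    · have := Ideal.mul_mem_mul (show x₂ ∈ I₂ from hx2) (show y₂ ∈ K₂ from hy2)
      rwa [h2, Ideal.mem_bot] at this

end ProdLemmas

set_option linter.unusedSectionVars false
set_option linter.unusedVariables false

section Main
variable {R₁ R₂ : Type*} [CommRing R₁] [IsLocalRing R₁] [IsPrincipalIdealRing R₁]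
  [CommRing R₂] [IsLocalRing R₂] [IsPrincipalIdealRing R₂] {n₁ n₂ : ℕ}

/-- Product ideal with given exponents of the maximal ideals. -/
def PP (R₁ R₂ : Type*) [CommRing R₁] [IsLocalRing R₁] [CommRing R₂] [IsLocalRing R₂]
    (a b : ℕ) : Ideal (R₁ × R₂) :=
  Ideal.prod ((maximalIdeal R₁) ^ a) ((maximalIdeal R₂) ^ b)

lemma PP_eq_iff (h1 : (maximalIdeal R₁) ^ n₁ = ⊥) (h2 : (maximalIdeal R₁) ^ (n₁ - 1) ≠ ⊥)
    (h3 : (maximalIdeal R₂) ^ n₂ = ⊥) (h4 : (maximalIdeal R₂) ^ (n₂ - 1) ≠ ⊥)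
    {a b a' b' : ℕ} (ha : a ≤ n₁) (hb : b ≤ n₂) (ha' : a' ≤ n₁) (hb' : b' ≤ n₂) :
    PP R₁ R₂ a b = PP R₁ R₂ a' b' ↔ a = a' ∧ b = b' := by
  rw [PP, PP, Ideal.prod_inj]
  constructor
  · rintro ⟨e1, e2⟩
    exact ⟨chain_pow_inj h1 h2 ha ha' e1, chain_pow_inj h3 h4 hb hb' e2⟩
  · rintro ⟨rfl, rfl⟩; exact ⟨rfl, rfl⟩

lemma PP_mul_eq_bot_iff (h1 : (maximalIdeal R₁) ^ n₁ = ⊥) (h2 : (maximalIdeal R₁) ^ (n₁ - 1) ≠ ⊥)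
    (h3 : (maximalIdeal R₂) ^ n₂ = ⊥) (h4 : (maximalIdeal R₂) ^ (n₂ - 1) ≠ ⊥)
    {a b a' b' : ℕ} :
    PP R₁ R₂ a b * PP R₁ R₂ a' b' = ⊥ ↔ n₁ ≤ a + a' ∧ n₂ ≤ b + b' := by
  rw [PP, PP, prod_mul_prod_eq_bot_iff, chain_pow_mul_eq_bot_iff h1 h2,
    chain_pow_mul_eq_bot_iff h3 h4]

lemma PP_eq_bot_iff (h1 : (maximalIdeal R₁) ^ n₁ = ⊥) (h2 : (maximalIdeal R₁) ^ (n₁ - 1) ≠ ⊥)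
    (h3 : (maximalIdeal R₂) ^ n₂ = ⊥) (h4 : (maximalIdeal R₂) ^ (n₂ - 1) ≠ ⊥) {a b : ℕ} :
    PP R₁ R₂ a b = ⊥ ↔ n₁ ≤ a ∧ n₂ ≤ b := by
  rw [PP, _root_.prod_eq_bot_iff, chain_pow_eq_bot_iff h1 h2, chain_pow_eq_bot_iff h3 h4]

lemma isVertex_PP (hn₁ : 2 ≤ n₁) (hn₂ : 2 ≤ n₂)
    (h1 : (maximalIdeal R₁) ^ n₁ = ⊥) (h2 : (maximalIdeal R₁) ^ (n₁ - 1) ≠ ⊥)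
    (h3 : (maximalIdeal R₂) ^ n₂ = ⊥) (h4 : (maximalIdeal R₂) ^ (n₂ - 1) ≠ ⊥)
    {a b : ℕ} (ha : a ≤ n₁) (hb : b ≤ n₂) (h0 : 1 ≤ a ∨ 1 ≤ b) (ht : a < n₁ ∨ b < n₂) :
    AGIsVertex (PP R₁ R₂ a b) := by
  constructor
  · rw [Ne, PP_eq_bot_iff h1 h2 h3 h4]; omega
  · refine ⟨PP R₁ R₂ (n₁ - a) (n₂ - b), ?_, ?_⟩
    · rw [Ne, PP_eq_bot_iff h1 h2 h3 h4]; omega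
    · rw [PP_mul_eq_bot_iff h1 h2 h3 h4]; omega

lemma vertex_rep (hn₁ : 2 ≤ n₁) (hn₂ : 2 ≤ n₂)
    (h1 : (maximalIdeal R₁) ^ n₁ = ⊥) (h2 : (maximalIdeal R₁) ^ (n₁ - 1) ≠ ⊥)
    (h3 : (maximalIdeal R₂) ^ n₂ = ⊥) (h4 : (maximalIdeal R₂) ^ (n₂ - 1) ≠ ⊥)
    (v : AGVertex (R₁ × R₂)) :
    ∃ a b, a ≤ n₁ ∧ b ≤ n₂ ∧ (1 ≤ a ∨ 1 ≤ b) ∧ (a < n₁ ∨ b < n₂) ∧ v.1 = PP R₁ R₂ a b := by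
  obtain ⟨I, hne, K, hKne, hK⟩ := v
  obtain ⟨a, ha, hIa⟩ := chain_ideal_eq_pow h1 (Ideal.map (RingHom.fst R₁ R₂) I)
  obtain ⟨b, hb, hIb⟩ := chain_ideal_eq_pow h3 (Ideal.map (RingHom.snd R₁ R₂) I)
  have hv : I = PP R₁ R₂ a b := by
    rw [PP, ← hIa, ← hIb]; exact Ideal.ideal_prod_eq I
  refine ⟨a, b, ha, hb, ?_, ?_, hv⟩
  · by_contra hc
    push_neg at hc
    obtain ⟨c, hcn, hKc⟩ := chain_ideal_eq_pow h1 (Ideal.map (RingHom.fst R₁ R₂) K)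
    obtain ⟨d, hdn, hKd⟩ := chain_ideal_eq_pow h3 (Ideal.map (RingHom.snd R₁ R₂) K)
    have hKp : K = PP R₁ R₂ c d := by
      rw [PP, ← hKc, ← hKd]; exact Ideal.ideal_prod_eq K
    rw [hv, hKp, PP_mul_eq_bot_iff h1 h2 h3 h4] at hK
    apply hKne
    rw [hKp, PP_eq_bot_iff h1 h2 h3 h4]
    omega
  · by_contra hc
    push_neg at hc
    apply hne
    rw [hv, PP_eq_bot_iff h1 h2 h3 h4]
    omega

lemma adj_PP (h1 : (maximalIdeal R₁) ^ n₁ = ⊥) (h2 : (maximalIdeal R₁) ^ (n₁ - 1) ≠ ⊥)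
    (h3 : (maximalIdeal R₂) ^ n₂ = ⊥) (h4 : (maximalIdeal R₂) ^ (n₂ - 1) ≠ ⊥)
    {a b a' b' : ℕ} (ha : a ≤ n₁) (hb : b ≤ n₂) (ha' : a' ≤ n₁) (hb' : b' ≤ n₂)
    (hu : AGIsVertex (PP R₁ R₂ a b)) (hv : AGIsVertex (PP R₁ R₂ a' b')) :
    (AG (R₁ × R₂)).Adj ⟨PP R₁ R₂ a b, hu⟩ ⟨PP R₁ R₂ a' b', hv⟩ ↔
      ¬(a = a' ∧ b = b') ∧ n₁ ≤ a + a' ∧ n₂ ≤ b + b' := by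
  show (⟨PP R₁ R₂ a b, hu⟩ : AGVertex (R₁ × R₂)) ≠ ⟨PP R₁ R₂ a' b', hv⟩ ∧
      PP R₁ R₂ a b * PP R₁ R₂ a' b' = ⊥ ↔ _
  rw [Ne, Subtype.mk_eq_mk, PP_eq_iff h1 h2 h3 h4 ha hb ha' hb',
    PP_mul_eq_bot_iff h1 h2 h3 h4]

end Main

section GraphHelpers
variable {V : Type*} {G : SimpleGraph V} {u m m' w : V}

lemma dist_le_two_of_adj (h1 : G.Adj u m) (h2 : G.Adj m w) : G.dist u w ≤ 2 := by
  simpa using SimpleGraph.dist_le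
    (SimpleGraph.Walk.cons h1 (SimpleGraph.Walk.cons h2 SimpleGraph.Walk.nil))

lemma dist_le_three_of_adj (h1 : G.Adj u m) (h2 : G.Adj m m') (h3 : G.Adj m' w) :
    G.dist u w ≤ 3 := by
  simpa using SimpleGraph.dist_le
    (SimpleGraph.Walk.cons h1 (SimpleGraph.Walk.cons h2
      (SimpleGraph.Walk.cons h3 SimpleGraph.Walk.nil)))

lemma exists_middle_of_dist_eq_two (hr : G.Reachable u w) (hd : G.dist u w = 2) :
    ∃ m, G.Adj u m ∧ G.Adj m w := by
  obtain ⟨p, hp⟩ := hr.exists_walk_length_eq_dist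
  rw [hd] at hp
  cases p with
  | nil => simp at hp
  | cons hadj q =>
    cases q with
    | nil => simp at hp
    | cons hadj' q' =>
      have hq0 : q'.length = 0 := by
        simp only [SimpleGraph.Walk.length_cons] at hp
        omega
      obtain rfl := SimpleGraph.Walk.eq_of_length_eq_zero hq0
      exact ⟨_, hadj, hadj'⟩

end GraphHelpers

/-- The distance profile function. -/
def fL (n₁ n₂ a b k : ℕ) : ℕ :=
  if a = k ∧ b = n₂ then 0 else if n₁ ≤ a + k then 1 else if 1 ≤ b ∨ 1 ≤ k then 2 else 3

section Dist
variable {R₁ R₂ : Type*} [CommRing R₁] [IsLocalRing R₁] [IsPrincipalIdealRing R₁]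
  [CommRing R₂] [IsLocalRing R₂] [IsPrincipalIdealRing R₂] {n₁ n₂ : ℕ}

set_option maxHeartbeats 1000000 in
lemma dist_PP_left (hn₁ : 2 ≤ n₁) (hn₂ : 2 ≤ n₂)
    (h1 : (maximalIdeal R₁) ^ n₁ = ⊥) (h2 : (maximalIdeal R₁) ^ (n₁ - 1) ≠ ⊥)
    (h3 : (maximalIdeal R₂) ^ n₂ = ⊥) (h4 : (maximalIdeal R₂) ^ (n₂ - 1) ≠ ⊥)
    {a b k : ℕ} (ha : a ≤ n₁) (hb : b ≤ n₂) (h0 : 1 ≤ a ∨ 1 ≤ b) (ht : a < n₁ ∨ b < n₂)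
    (hk : k ≤ n₁ - 2) (hu : AGIsVertex (PP R₁ R₂ a b)) (hw : AGIsVertex (PP R₁ R₂ k n₂)) :
    (AG (R₁ × R₂)).dist ⟨PP R₁ R₂ a b, hu⟩ ⟨PP R₁ R₂ k n₂, hw⟩ = fL n₁ n₂ a b k := by
  have hkb : k ≤ n₁ := by omega
  rw [fL]
  split_ifs with hc0 hc1 hc2
  · obtain ⟨rfl, rfl⟩ := hc0
    exact SimpleGraph.dist_self
  · exact SimpleGraph.dist_eq_one_iff_adj.2
      ((adj_PP h1 h2 h3 h4 ha hb hkb le_rfl hu hw).2 ⟨hc0, hc1, by omega⟩)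
  all_goals {
    have hne_uw : (⟨PP R₁ R₂ a b, hu⟩ : AGVertex (R₁ × R₂)) ≠ ⟨PP R₁ R₂ k n₂, hw⟩ := by
      intro hc
      rw [Subtype.mk_eq_mk, PP_eq_iff h1 h2 h3 h4 ha hb hkb le_rfl] at hc
      exact hc0 hc
    have hnadj : ¬ (AG (R₁ × R₂)).Adj ⟨PP R₁ R₂ a b, hu⟩ ⟨PP R₁ R₂ k n₂, hw⟩ := by
      rw [adj_PP h1 h2 h3 h4 ha hb hkb le_rfl hu hw]
      rintro ⟨-, hs, -⟩
      exact hc1 hs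
    first
    | -- distance-2 case
      ( have hsplit : 1 ≤ b ∨ (b = 0 ∧ 1 ≤ k ∧ 1 ≤ a) := by omega
        rcases hsplit with hb1 | ⟨hb0, hk1, ha1⟩
        · have hmv : AGIsVertex (PP R₁ R₂ n₁ (n₂ - 1)) :=
            isVertex_PP hn₁ hn₂ h1 h2 h3 h4 le_rfl (by omega) (by omega) (by omega)
          have had1 : (AG (R₁ × R₂)).Adj ⟨PP R₁ R₂ a b, hu⟩ ⟨PP R₁ R₂ n₁ (n₂ - 1), hmv⟩ :=
            (adj_PP h1 h2 h3 h4 ha hb le_rfl (by omega) hu hmv).2 ⟨by omega, by omega, by omega⟩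
          have had2 : (AG (R₁ × R₂)).Adj ⟨PP R₁ R₂ n₁ (n₂ - 1), hmv⟩ ⟨PP R₁ R₂ k n₂, hw⟩ :=
            (adj_PP h1 h2 h3 h4 le_rfl (by omega) hkb le_rfl hmv hw).2
              ⟨by omega, by omega, by omega⟩
          have hub := dist_le_two_of_adj had1 had2
          have hr := had1.reachable.trans had2.reachable
          have hd0 : (AG (R₁ × R₂)).dist ⟨PP R₁ R₂ a b, hu⟩ ⟨PP R₁ R₂ k n₂, hw⟩ ≠ 0 :=
            fun hd => hne_uw (hr.dist_eq_zero_iff.1 hd)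
          have hd1 : (AG (R₁ × R₂)).dist ⟨PP R₁ R₂ a b, hu⟩ ⟨PP R₁ R₂ k n₂, hw⟩ ≠ 1 :=
            fun hd => hnadj (SimpleGraph.dist_eq_one_iff_adj.1 hd)
          omega
        · have hmv : AGIsVertex (PP R₁ R₂ (n₁ - 1) n₂) :=
            isVertex_PP hn₁ hn₂ h1 h2 h3 h4 (by omega) le_rfl (by omega) (by omega)
          have had1 : (AG (R₁ × R₂)).Adj ⟨PP R₁ R₂ a b, hu⟩ ⟨PP R₁ R₂ (n₁ - 1) n₂, hmv⟩ :=
            (adj_PP h1 h2 h3 h4 ha hb (by omega) le_rfl hu hmv).2 ⟨by omega, by omega, by omega⟩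
          have had2 : (AG (R₁ × R₂)).Adj ⟨PP R₁ R₂ (n₁ - 1) n₂, hmv⟩ ⟨PP R₁ R₂ k n₂, hw⟩ :=
            (adj_PP h1 h2 h3 h4 (by omega) le_rfl hkb le_rfl hmv hw).2
              ⟨by omega, by omega, by omega⟩
          have hub := dist_le_two_of_adj had1 had2
          have hr := had1.reachable.trans had2.reachable
          have hd0 : (AG (R₁ × R₂)).dist ⟨PP R₁ R₂ a b, hu⟩ ⟨PP R₁ R₂ k n₂, hw⟩ ≠ 0 :=
            fun hd => hne_uw (hr.dist_eq_zero_iff.1 hd)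
          have hd1 : (AG (R₁ × R₂)).dist ⟨PP R₁ R₂ a b, hu⟩ ⟨PP R₁ R₂ k n₂, hw⟩ ≠ 1 :=
            fun hd => hnadj (SimpleGraph.dist_eq_one_iff_adj.1 hd)
          omega )
    | -- distance-3 case
      ( have hb0 : b = 0 := by omega
        have hk0 : k = 0 := by omega
        have ha1 : 1 ≤ a := by omega
        have hm1v : AGIsVertex (PP R₁ R₂ (n₁ - 1) n₂) :=
          isVertex_PP hn₁ hn₂ h1 h2 h3 h4 (by omega) le_rfl (by omega) (by omega)
        have hm2v : AGIsVertex (PP R₁ R₂ n₁ (n₂ - 1)) :=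
          isVertex_PP hn₁ hn₂ h1 h2 h3 h4 le_rfl (by omega) (by omega) (by omega)
        have had1 : (AG (R₁ × R₂)).Adj ⟨PP R₁ R₂ a b, hu⟩ ⟨PP R₁ R₂ (n₁ - 1) n₂, hm1v⟩ :=
          (adj_PP h1 h2 h3 h4 ha hb (by omega) le_rfl hu hm1v).2 ⟨by omega, by omega, by omega⟩
        have had2 : (AG (R₁ × R₂)).Adj ⟨PP R₁ R₂ (n₁ - 1) n₂, hm1v⟩ ⟨PP R₁ R₂ n₁ (n₂ - 1), hm2v⟩ :=
          (adj_PP h1 h2 h3 h4 (by omega) le_rfl le_rfl (by omega) hm1v hm2v).2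
            ⟨by omega, by omega, by omega⟩
        have had3 : (AG (R₁ × R₂)).Adj ⟨PP R₁ R₂ n₁ (n₂ - 1), hm2v⟩ ⟨PP R₁ R₂ k n₂, hw⟩ :=
          (adj_PP h1 h2 h3 h4 le_rfl (by omega) hkb le_rfl hm2v hw).2
            ⟨by omega, by omega, by omega⟩
        have hub := dist_le_three_of_adj had1 had2 had3
        have hr := had1.reachable.trans (had2.reachable.trans had3.reachable)
        have hd0 : (AG (R₁ × R₂)).dist ⟨PP R₁ R₂ a b, hu⟩ ⟨PP R₁ R₂ k n₂, hw⟩ ≠ 0 :=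
          fun hd => hne_uw (hr.dist_eq_zero_iff.1 hd)
        have hd1 : (AG (R₁ × R₂)).dist ⟨PP R₁ R₂ a b, hu⟩ ⟨PP R₁ R₂ k n₂, hw⟩ ≠ 1 :=
          fun hd => hnadj (SimpleGraph.dist_eq_one_iff_adj.1 hd)
        have hd2 : (AG (R₁ × R₂)).dist ⟨PP R₁ R₂ a b, hu⟩ ⟨PP R₁ R₂ k n₂, hw⟩ ≠ 2 := by
          intro hd
          obtain ⟨m, hadj1, hadj2⟩ := exists_middle_of_dist_eq_two hr hd
          obtain ⟨c, d, hcn, hdn, hm0, hmt, hmrep⟩ := vertex_rep hn₁ hn₂ h1 h2 h3 h4 m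
          obtain ⟨-, hprod1⟩ := hadj1
          obtain ⟨-, hprod2⟩ := hadj2
          have e1 : (⟨PP R₁ R₂ a b, hu⟩ : AGVertex (R₁ × R₂)).1 = PP R₁ R₂ a b := rfl
          have e2 : (⟨PP R₁ R₂ k n₂, hw⟩ : AGVertex (R₁ × R₂)).1 = PP R₁ R₂ k n₂ := rfl
          rw [hmrep, e1, PP_mul_eq_bot_iff h1 h2 h3 h4] at hprod1
          rw [hmrep, e2, PP_mul_eq_bot_iff h1 h2 h3 h4] at hprod2
          omega
        omega )
  }

end Dist

section Dist2
variable {R₁ R₂ : Type*} [CommRing R₁] [IsLocalRing R₁] [IsPrincipalIdealRing R₁]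
  [CommRing R₂] [IsLocalRing R₂] [IsPrincipalIdealRing R₂] {n₁ n₂ : ℕ}

set_option maxHeartbeats 1000000 in
lemma dist_PP_right (hn₁ : 2 ≤ n₁) (hn₂ : 2 ≤ n₂)
    (h1 : (maximalIdeal R₁) ^ n₁ = ⊥) (h2 : (maximalIdeal R₁) ^ (n₁ - 1) ≠ ⊥)
    (h3 : (maximalIdeal R₂) ^ n₂ = ⊥) (h4 : (maximalIdeal R₂) ^ (n₂ - 1) ≠ ⊥)
    {a b k : ℕ} (ha : a ≤ n₁) (hb : b ≤ n₂) (h0 : 1 ≤ a ∨ 1 ≤ b) (ht : a < n₁ ∨ b < n₂)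
    (hk : k ≤ n₂ - 2) (hu : AGIsVertex (PP R₁ R₂ a b)) (hw : AGIsVertex (PP R₁ R₂ n₁ k)) :
    (AG (R₁ × R₂)).dist ⟨PP R₁ R₂ a b, hu⟩ ⟨PP R₁ R₂ n₁ k, hw⟩ = fL n₂ n₁ b a k := by
  have hkb : k ≤ n₂ := by omega
  rw [fL]
  split_ifs with hc0 hc1 hc2
  · obtain ⟨rfl, rfl⟩ := hc0
    exact SimpleGraph.dist_self
  · exact SimpleGraph.dist_eq_one_iff_adj.2
      ((adj_PP h1 h2 h3 h4 ha hb le_rfl hkb hu hw).2 ⟨by omega, by omega, hc1⟩)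
  all_goals {
    have hne_uw : (⟨PP R₁ R₂ a b, hu⟩ : AGVertex (R₁ × R₂)) ≠ ⟨PP R₁ R₂ n₁ k, hw⟩ := by
      intro hc
      rw [Subtype.mk_eq_mk, PP_eq_iff h1 h2 h3 h4 ha hb le_rfl hkb] at hc
      exact hc0 ⟨hc.2, hc.1⟩
    have hnadj : ¬ (AG (R₁ × R₂)).Adj ⟨PP R₁ R₂ a b, hu⟩ ⟨PP R₁ R₂ n₁ k, hw⟩ := by
      rw [adj_PP h1 h2 h3 h4 ha hb le_rfl hkb hu hw]
      rintro ⟨-, -, hs⟩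
      exact hc1 hs
    first
    | ( have hsplit : 1 ≤ a ∨ (a = 0 ∧ 1 ≤ k ∧ 1 ≤ b) := by omega
        rcases hsplit with ha1 | ⟨ha0, hk1, hb1⟩
        · have hmv : AGIsVertex (PP R₁ R₂ (n₁ - 1) n₂) :=
            isVertex_PP hn₁ hn₂ h1 h2 h3 h4 (by omega) le_rfl (by omega) (by omega)
          have had1 : (AG (R₁ × R₂)).Adj ⟨PP R₁ R₂ a b, hu⟩ ⟨PP R₁ R₂ (n₁ - 1) n₂, hmv⟩ :=
            (adj_PP h1 h2 h3 h4 ha hb (by omega) le_rfl hu hmv).2 ⟨by omega, by omega, by omega⟩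
          have had2 : (AG (R₁ × R₂)).Adj ⟨PP R₁ R₂ (n₁ - 1) n₂, hmv⟩ ⟨PP R₁ R₂ n₁ k, hw⟩ :=
            (adj_PP h1 h2 h3 h4 (by omega) le_rfl le_rfl hkb hmv hw).2
              ⟨by omega, by omega, by omega⟩
          have hub := dist_le_two_of_adj had1 had2
          have hr := had1.reachable.trans had2.reachable
          have hd0 : (AG (R₁ × R₂)).dist ⟨PP R₁ R₂ a b, hu⟩ ⟨PP R₁ R₂ n₁ k, hw⟩ ≠ 0 :=
            fun hd => hne_uw (hr.dist_eq_zero_iff.1 hd)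
          have hd1 : (AG (R₁ × R₂)).dist ⟨PP R₁ R₂ a b, hu⟩ ⟨PP R₁ R₂ n₁ k, hw⟩ ≠ 1 :=
            fun hd => hnadj (SimpleGraph.dist_eq_one_iff_adj.1 hd)
          omega
        · have hmv : AGIsVertex (PP R₁ R₂ n₁ (n₂ - 1)) :=
            isVertex_PP hn₁ hn₂ h1 h2 h3 h4 le_rfl (by omega) (by omega) (by omega)
          have had1 : (AG (R₁ × R₂)).Adj ⟨PP R₁ R₂ a b, hu⟩ ⟨PP R₁ R₂ n₁ (n₂ - 1), hmv⟩ :=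
            (adj_PP h1 h2 h3 h4 ha hb le_rfl (by omega) hu hmv).2 ⟨by omega, by omega, by omega⟩
          have had2 : (AG (R₁ × R₂)).Adj ⟨PP R₁ R₂ n₁ (n₂ - 1), hmv⟩ ⟨PP R₁ R₂ n₁ k, hw⟩ :=
            (adj_PP h1 h2 h3 h4 le_rfl (by omega) le_rfl hkb hmv hw).2
              ⟨by omega, by omega, by omega⟩
          have hub := dist_le_two_of_adj had1 had2
          have hr := had1.reachable.trans had2.reachable
          have hd0 : (AG (R₁ × R₂)).dist ⟨PP R₁ R₂ a b, hu⟩ ⟨PP R₁ R₂ n₁ k, hw⟩ ≠ 0 :=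
            fun hd => hne_uw (hr.dist_eq_zero_iff.1 hd)
          have hd1 : (AG (R₁ × R₂)).dist ⟨PP R₁ R₂ a b, hu⟩ ⟨PP R₁ R₂ n₁ k, hw⟩ ≠ 1 :=
            fun hd => hnadj (SimpleGraph.dist_eq_one_iff_adj.1 hd)
          omega )
    | ( have ha0 : a = 0 := by omega
        have hk0 : k = 0 := by omega
        have hb1 : 1 ≤ b := by omega
        have hm1v : AGIsVertex (PP R₁ R₂ n₁ (n₂ - 1)) :=
          isVertex_PP hn₁ hn₂ h1 h2 h3 h4 le_rfl (by omega) (by omega) (by omega)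
        have hm2v : AGIsVertex (PP R₁ R₂ (n₁ - 1) n₂) :=
          isVertex_PP hn₁ hn₂ h1 h2 h3 h4 (by omega) le_rfl (by omega) (by omega)
        have had1 : (AG (R₁ × R₂)).Adj ⟨PP R₁ R₂ a b, hu⟩ ⟨PP R₁ R₂ n₁ (n₂ - 1), hm1v⟩ :=
          (adj_PP h1 h2 h3 h4 ha hb le_rfl (by omega) hu hm1v).2 ⟨by omega, by omega, by omega⟩
        have had2 : (AG (R₁ × R₂)).Adj ⟨PP R₁ R₂ n₁ (n₂ - 1), hm1v⟩ ⟨PP R₁ R₂ (n₁ - 1) n₂, hm2v⟩ :=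
          (adj_PP h1 h2 h3 h4 le_rfl (by omega) (by omega) le_rfl hm1v hm2v).2
            ⟨by omega, by omega, by omega⟩
        have had3 : (AG (R₁ × R₂)).Adj ⟨PP R₁ R₂ (n₁ - 1) n₂, hm2v⟩ ⟨PP R₁ R₂ n₁ k, hw⟩ :=
          (adj_PP h1 h2 h3 h4 (by omega) le_rfl le_rfl hkb hm2v hw).2
            ⟨by omega, by omega, by omega⟩
        have hub := dist_le_three_of_adj had1 had2 had3
        have hr := had1.reachable.trans (had2.reachable.trans had3.reachable)
        have hd0 : (AG (R₁ × R₂)).dist ⟨PP R₁ R₂ a b, hu⟩ ⟨PP R₁ R₂ n₁ k, hw⟩ ≠ 0 :=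
          fun hd => hne_uw (hr.dist_eq_zero_iff.1 hd)
        have hd1 : (AG (R₁ × R₂)).dist ⟨PP R₁ R₂ a b, hu⟩ ⟨PP R₁ R₂ n₁ k, hw⟩ ≠ 1 :=
          fun hd => hnadj (SimpleGraph.dist_eq_one_iff_adj.1 hd)
        have hd2 : (AG (R₁ × R₂)).dist ⟨PP R₁ R₂ a b, hu⟩ ⟨PP R₁ R₂ n₁ k, hw⟩ ≠ 2 := by
          intro hd
          obtain ⟨m, hadj1, hadj2⟩ := exists_middle_of_dist_eq_two hr hd
          obtain ⟨c, d, hcn, hdn, hm0, hmt, hmrep⟩ := vertex_rep hn₁ hn₂ h1 h2 h3 h4 m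
          obtain ⟨-, hprod1⟩ := hadj1
          obtain ⟨-, hprod2⟩ := hadj2
          have e1 : (⟨PP R₁ R₂ a b, hu⟩ : AGVertex (R₁ × R₂)).1 = PP R₁ R₂ a b := rfl
          have e2 : (⟨PP R₁ R₂ n₁ k, hw⟩ : AGVertex (R₁ × R₂)).1 = PP R₁ R₂ n₁ k := rfl
          rw [hmrep, e1, PP_mul_eq_bot_iff h1 h2 h3 h4] at hprod1
          rw [hmrep, e2, PP_mul_eq_bot_iff h1 h2 h3 h4] at hprod2
          omega
        omega )
  }

end Dist2

lemma keyA (n₁ n₂ a b a' b' : ℕ) (hn₁ : 2 ≤ n₁) (hn₂ : 2 ≤ n₂)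
    (ha : a ≤ n₁) (hb : b ≤ n₂) (ha' : a' ≤ n₁) (hb' : b' ≤ n₂)
    (H1 : ∀ k ≤ n₁ - 2, fL n₁ n₂ a b k = fL n₁ n₂ a' b' k)
    (H2 : ∀ k ≤ n₂ - 2, fL n₂ n₁ b a k = fL n₂ n₁ b' a' k) :
    ¬ a < a' := by
  intro hlt
  by_cases h2a : 2 ≤ a'
  · have H := H1 (n₁ - a') (by omega)
    rw [fL, fL] at H
    split_ifs at H <;> omega
  · have Ha := H1 0 (by omega)
    have Hb := H2 0 (by omega)
    rw [fL, fL] at Ha Hb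
    split_ifs at Ha Hb <;> omega

lemma keyMain (n₁ n₂ a b a' b' : ℕ) (hn₁ : 2 ≤ n₁) (hn₂ : 2 ≤ n₂)
    (ha : a ≤ n₁) (hb : b ≤ n₂) (ha' : a' ≤ n₁) (hb' : b' ≤ n₂)
    (H1 : ∀ k ≤ n₁ - 2, fL n₁ n₂ a b k = fL n₁ n₂ a' b' k)
    (H2 : ∀ k ≤ n₂ - 2, fL n₂ n₁ b a k = fL n₂ n₁ b' a' k) :
    a = a' ∧ b = b' := by
  have H1' : ∀ k ≤ n₁ - 2, fL n₁ n₂ a' b' k = fL n₁ n₂ a b k := fun k hk => (H1 k hk).symm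
  have H2' : ∀ k ≤ n₂ - 2, fL n₂ n₁ b' a' k = fL n₂ n₁ b a k := fun k hk => (H2 k hk).symm
  constructor
  · rcases lt_trichotomy a a' with h | h | h
    · exact absurd h (keyA n₁ n₂ a b a' b' hn₁ hn₂ ha hb ha' hb' H1 H2)
    · exact h
    · exact absurd h (keyA n₁ n₂ a' b' a b hn₁ hn₂ ha' hb' ha hb H1' H2')
  · rcases lt_trichotomy b b' with h | h | h
    · exact absurd h (keyA n₂ n₁ b a b' a' hn₂ hn₁ hb ha hb' ha' H2 H1)
    · exact h
    · exact absurd h (keyA n₂ n₁ b' a' b a hn₂ hn₁ hb' ha' hb ha H2' H1')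

theorem stmt11 (R₁ R₂ : Type*) [CommRing R₁] [Finite R₁] [IsLocalRing R₁] [IsPrincipalIdealRing R₁]
    [CommRing R₂] [Finite R₂] [IsLocalRing R₂] [IsPrincipalIdealRing R₂]
    (n₁ n₂ : ℕ) (hn₁ : 2 ≤ n₁) (hn₂ : 2 ≤ n₂)
    (h1 : (maximalIdeal R₁) ^ n₁ = ⊥) (h2 : (maximalIdeal R₁) ^ (n₁ - 1) ≠ ⊥)
    (h3 : (maximalIdeal R₂) ^ n₂ = ⊥) (h4 : (maximalIdeal R₂) ^ (n₂ - 1) ≠ ⊥) :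
    IsResolving (AG (R₁ × R₂))
      {v : AGVertex (R₁ × R₂) | (∃ k ≤ n₁ - 2, v.1 = Ideal.prod ((maximalIdeal R₁) ^ k) ⊥) ∨
        (∃ k ≤ n₂ - 2, v.1 = Ideal.prod ⊥ ((maximalIdeal R₂) ^ k))} ∧
    Set.ncard
      {v : AGVertex (R₁ × R₂) | (∃ k ≤ n₁ - 2, v.1 = Ideal.prod ((maximalIdeal R₁) ^ k) ⊥) ∨
        (∃ k ≤ n₂ - 2, v.1 = Ideal.prod ⊥ ((maximalIdeal R₂) ^ k))} = n₁ + n₂ - 2 := by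
  have hwv1 : ∀ k, k ≤ n₁ - 2 → AGIsVertex (PP R₁ R₂ k n₂) := fun k hk =>
    isVertex_PP hn₁ hn₂ h1 h2 h3 h4 (by omega) le_rfl (by omega) (by omega)
  have hwv2 : ∀ k, k ≤ n₂ - 2 → AGIsVertex (PP R₁ R₂ n₁ k) := fun k hk =>
    isVertex_PP hn₁ hn₂ h1 h2 h3 h4 le_rfl (by omega) (by omega) (by omega)
  have hPP1 : ∀ k : ℕ, PP R₁ R₂ k n₂ = Ideal.prod ((maximalIdeal R₁) ^ k) ⊥ := by
    intro k; rw [PP, h3]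
  have hPP2 : ∀ k : ℕ, PP R₁ R₂ n₁ k = Ideal.prod ⊥ ((maximalIdeal R₂) ^ k) := by
    intro k; rw [PP, h1]
  constructor
  · intro u v huv
    obtain ⟨a, b, ha, hb, h0u, htu, hurep⟩ := vertex_rep hn₁ hn₂ h1 h2 h3 h4 u
    obtain ⟨a', b', ha', hb', h0v, htv, hvrep⟩ := vertex_rep hn₁ hn₂ h1 h2 h3 h4 v
    have huP : AGIsVertex (PP R₁ R₂ a b) := hurep ▸ u.2
    have hvP : AGIsVertex (PP R₁ R₂ a' b') := hvrep ▸ v.2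
    have hueq : u = ⟨PP R₁ R₂ a b, huP⟩ := Subtype.ext hurep
    have hveq : v = ⟨PP R₁ R₂ a' b', hvP⟩ := Subtype.ext hvrep
    have H1 : ∀ k ≤ n₁ - 2, fL n₁ n₂ a b k = fL n₁ n₂ a' b' k := by
      intro k hk
      have hmem : (⟨PP R₁ R₂ k n₂, hwv1 k hk⟩ : AGVertex (R₁ × R₂)) ∈
          {v : AGVertex (R₁ × R₂) |
            (∃ k ≤ n₁ - 2, v.1 = Ideal.prod ((maximalIdeal R₁) ^ k) ⊥) ∨
            (∃ k ≤ n₂ - 2, v.1 = Ideal.prod ⊥ ((maximalIdeal R₂) ^ k))} :=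
        Or.inl ⟨k, hk, hPP1 k⟩
      have hd := huv _ hmem
      rw [hueq, hveq] at hd
      rw [← dist_PP_left hn₁ hn₂ h1 h2 h3 h4 ha hb h0u htu hk huP (hwv1 k hk), hd,
        dist_PP_left hn₁ hn₂ h1 h2 h3 h4 ha' hb' h0v htv hk hvP (hwv1 k hk)]
    have H2 : ∀ k ≤ n₂ - 2, fL n₂ n₁ b a k = fL n₂ n₁ b' a' k := by
      intro k hk
      have hmem : (⟨PP R₁ R₂ n₁ k, hwv2 k hk⟩ : AGVertex (R₁ × R₂)) ∈
          {v : AGVertex (R₁ × R₂) |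
            (∃ k ≤ n₁ - 2, v.1 = Ideal.prod ((maximalIdeal R₁) ^ k) ⊥) ∨
            (∃ k ≤ n₂ - 2, v.1 = Ideal.prod ⊥ ((maximalIdeal R₂) ^ k))} :=
        Or.inr ⟨k, hk, hPP2 k⟩
      have hd := huv _ hmem
      rw [hueq, hveq] at hd
      rw [← dist_PP_right hn₁ hn₂ h1 h2 h3 h4 ha hb h0u htu hk huP (hwv2 k hk), hd,
        dist_PP_right hn₁ hn₂ h1 h2 h3 h4 ha' hb' h0v htv hk hvP (hwv2 k hk)]
    obtain ⟨hA, hB⟩ := keyMain n₁ n₂ a b a' b' hn₁ hn₂ ha hb ha' hb' H1 H2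
    rw [hueq, hveq]
    exact Subtype.ext (by show PP R₁ R₂ a b = PP R₁ R₂ a' b'; rw [hA, hB])
  · set g : (Fin (n₁ - 1) ⊕ Fin (n₂ - 1)) → AGVertex (R₁ × R₂) := fun i =>
      match i with
      | .inl j => ⟨PP R₁ R₂ j n₂, hwv1 j (by have := j.isLt; omega)⟩
      | .inr j => ⟨PP R₁ R₂ n₁ j, hwv2 j (by have := j.isLt; omega)⟩
      with hg
    have hginj : Function.Injective g := by
      rintro (⟨i, hi⟩ | ⟨i, hi⟩) (⟨j, hj⟩ | ⟨j, hj⟩) hgij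
      · have h' : PP R₁ R₂ i n₂ = PP R₁ R₂ j n₂ := congrArg Subtype.val hgij
        rw [PP_eq_iff h1 h2 h3 h4 (by omega) le_rfl (by omega) le_rfl] at h'
        obtain ⟨h, -⟩ := h'
        subst h
        rfl
      · have h' : PP R₁ R₂ i n₂ = PP R₁ R₂ n₁ j := congrArg Subtype.val hgij
        rw [PP_eq_iff h1 h2 h3 h4 (by omega) le_rfl le_rfl (by omega)] at h'
        omega
      · have h' : PP R₁ R₂ n₁ i = PP R₁ R₂ j n₂ := congrArg Subtype.val hgij
        rw [PP_eq_iff h1 h2 h3 h4 le_rfl (by omega) (by omega) le_rfl] at h'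
        omega
      · have h' : PP R₁ R₂ n₁ i = PP R₁ R₂ n₁ j := congrArg Subtype.val hgij
        rw [PP_eq_iff h1 h2 h3 h4 le_rfl (by omega) le_rfl (by omega)] at h'
        obtain ⟨-, h⟩ := h'
        subst h
        rfl
    have hrange :
        {v : AGVertex (R₁ × R₂) |
          (∃ k ≤ n₁ - 2, v.1 = Ideal.prod ((maximalIdeal R₁) ^ k) ⊥) ∨
          (∃ k ≤ n₂ - 2, v.1 = Ideal.prod ⊥ ((maximalIdeal R₂) ^ k))} = Set.range g := by
      ext v
      constructor
      · rintro (⟨k, hk, hv⟩ | ⟨k, hk, hv⟩)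
        · refine ⟨.inl ⟨k, by omega⟩, Subtype.ext ?_⟩
          show PP R₁ R₂ k n₂ = v.1
          rw [hv]
          exact hPP1 k
        · refine ⟨.inr ⟨k, by omega⟩, Subtype.ext ?_⟩
          show PP R₁ R₂ n₁ k = v.1
          rw [hv]
          exact hPP2 k
      · rintro ⟨i, rfl⟩
        rcases i with ⟨k, hkl⟩ | ⟨k, hkl⟩
        · refine Or.inl ⟨k, by omega, ?_⟩
          show PP R₁ R₂ k n₂ = _
          exact hPP1 k
        · refine Or.inr ⟨k, by omega, ?_⟩
          show PP R₁ R₂ n₁ k = _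
          exact hPP2 k
    rw [hrange, ← Set.image_univ, Set.ncard_image_of_injective _ hginj, Set.ncard_univ,
      Nat.card_sum]
    simp only [Nat.card_eq_fintype_card, Fintype.card_fin]
    omega
end
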